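/- Pointwise convergence of the forward averaging operator: Let d ∈ (0,1), f ∈ SD²_{d−1}(0+), f_δ(t,v) = f(t+δ,t+δ−δv)/f(t+δ,t), and let X : [0,∞) → ℝ be a càdlàg path bounded on compacts. Then for every t ∈ [0,1], lim_{δ↓0} | ∫₀¹ f_δ(t,v) X(t+δ(1−v)) dv − (1/d) X(t) | = 0. -/

import Mathlib

open MeasureTheory ProbabilityTheory Filter Set intervalIntegral Real

/-- `p01 F t r = ∂F/∂r (t,r)` -/
noncomputable def p01 (F : ℝ → ℝ → ℝ) (t r : ℝ) : ℝ := deriv (fun x => F t x) r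
/-- `p10 F t r = ∂F/∂t (t,r)` -/
noncomputable def p10 (F : ℝ → ℝ → ℝ) (t r : ℝ) : ℝ := deriv (fun x => F x r) t
/-- `p11 F t r = ∂²F/∂t∂r (t,r)` -/
noncomputable def p11 (F : ℝ → ℝ → ℝ) (t r : ℝ) : ℝ := deriv (fun x => p01 F x r) t
/-- `p02 F t r = ∂²F/∂r² (t,r)` -/
noncomputable def p02 (F : ℝ → ℝ → ℝ) (t r : ℝ) : ℝ := deriv (fun x => p01 F t x) r

/-- `lim_{h↓0} sup_{t∈K} |G h t + c| = 0` for every compact `K ⊂ ℝ`. -/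
def UnifDiagLimit (G : ℝ → ℝ → ℝ) (c : ℝ) : Prop :=
  ∀ K : Set ℝ, IsCompact K → ∀ ε > 0, ∃ h₀ > 0, ∀ h : ℝ, 0 < h → h < h₀ →
    ∀ t ∈ K, |G h t + c| < ε

/-- `F ∈ SR²_ρ(0+)` : a function of smooth variation of index `ρ` at the diagonal. -/
def SmoothVar (F : ℝ → ℝ → ℝ) (ρ : ℝ) : Prop :=
  ContinuousOn (fun p : ℝ × ℝ => F p.1 p.2) {p : ℝ × ℝ | p.2 ≤ p.1} ∧
  ContDiffOn ℝ 2 (fun p : ℝ × ℝ => F p.1 p.2) {p : ℝ × ℝ | p.2 < p.1} ∧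
  (∀ t r : ℝ, r < t → 0 < F t r) ∧
  UnifDiagLimit (fun h t => h * p01 F t (t - h) / F t (t - h)) ρ ∧
  UnifDiagLimit (fun h t => h * p10 F (t + h) t / F (t + h) t) (-ρ) ∧
  UnifDiagLimit (fun h t => h ^ 2 * p11 F t (t - h) / F t (t - h)) (ρ * (ρ - 1)) ∧
  UnifDiagLimit (fun h t => h ^ 2 * p02 F t (t - h) / F t (t - h)) (-(ρ * (ρ - 1)))

/-! Substituting `u = t + δ (1 - v)` writes the integral as a weighted average of `X` over
`[t, t + δ]`, with weight `-∂₂F(t + δ, ·)` of total mass `F(t + δ, t)` (as `F` vanishes on the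
diagonal), times the prefactor `-F(t + δ, t) / (δ ∂₂F(t + δ, t))`. Right-continuity of `X` sends the
average to `X t`, and the smooth-variation condition sends the prefactor to `1 / d`. -/

open scoped Topology

theorem measurable_of_continuousWithinAt_Ici {X : ℝ → ℝ}
    (hX : ∀ s, ContinuousWithinAt X (Ici s) s) : Measurable X := by
  -- `X` is the pointwise limit of its values on the dyadic grids, approached from the right.
  set q : ℕ → ℝ → ℝ := fun n u => (⌈u * 2 ^ n⌉ : ℤ) / 2 ^ n
  have hq_meas : ∀ n, Measurable (fun u => X (q n u)) := fun n =>
    (measurable_of_countable (fun k : ℤ => X (k / 2 ^ n))).comp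
      (Int.measurable_ceil.comp (measurable_id.mul_const _))
  have hq_ge : ∀ n u, u ≤ q n u := fun n u => by
    rw [le_div_iff₀ (by positivity)]
    exact Int.le_ceil _
  have hq_le : ∀ n u, q n u ≤ u + (1 / 2) ^ n := fun n u => by
    rw [div_le_iff₀ (by positivity), add_mul, ← mul_pow, one_div_mul_cancel two_ne_zero, one_pow]
    exact (Int.ceil_lt_add_one _).le
  refine measurable_of_tendsto_metrizable hq_meas (tendsto_pi_nhds.mpr fun u => ?_)
  have hu : Tendsto (fun n => u + (1 / 2 : ℝ) ^ n) atTop (𝓝 u) := by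
    simpa using tendsto_const_nhds.add
      (tendsto_pow_atTop_nhds_zero_of_lt_one (by norm_num : (0 : ℝ) ≤ 1 / 2) (by norm_num))
  refine (hX u).tendsto.comp (tendsto_nhdsWithin_iff.mpr ⟨?_, .of_forall fun n => hq_ge n u⟩)
  exact tendsto_of_tendsto_of_tendsto_of_le_of_le tendsto_const_nhds hu (hq_ge · u) (hq_le · u)

theorem UnifDiagLimit.tendsto_nhdsGT {G : ℝ → ℝ → ℝ} {c : ℝ} (hG : UnifDiagLimit G c) (t : ℝ) :
    Tendsto (fun h => G h (t + h)) (𝓝[>] 0) (𝓝 (-c)) := by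
  rw [Metric.tendsto_nhdsWithin_nhds]
  intro ε hε
  obtain ⟨h₀, hh₀, hG⟩ := hG (Icc t (t + 1)) isCompact_Icc ε hε
  refine ⟨min h₀ 1, lt_min hh₀ one_pos, fun h (hh : 0 < h) hdist => ?_⟩
  rw [Real.dist_eq, sub_zero, abs_of_pos hh, lt_min_iff] at hdist
  rw [Real.dist_eq, sub_neg_eq_add]
  exact hG h hh hdist.1 _ ⟨by linarith, by linarith⟩

theorem hasDerivAt_p01 {F : ℝ → ℝ → ℝ}
    (hF : DifferentiableOn ℝ (fun p : ℝ × ℝ => F p.1 p.2) {p | p.2 < p.1}) {s r : ℝ}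
    (hrs : r < s) : HasDerivAt (F s) (p01 F s r) r := by
  have hFsr : DifferentiableAt ℝ (fun p : ℝ × ℝ => F p.1 p.2) (s, r) :=
    hF.differentiableAt ((isOpen_lt continuous_snd continuous_fst).mem_nhds hrs)
  exact (hFsr.comp r ((differentiableAt_const s).prodMk differentiableAt_id)).hasDerivAt

theorem tendsto_nhdsGT_zero_of_le_mul_deriv {g g' : ℝ → ℝ} {b c : ℝ} (hb : 0 < b) (hc : 0 < c)
    (hg : ∀ x ∈ Ioo 0 b, HasDerivAt g (g' x) x) (hg_pos : ∀ x ∈ Ioo 0 b, 0 < g x)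
    (hg' : ∀ x ∈ Ioo 0 b, c * g x ≤ x * g' x) : Tendsto g (𝓝[>] 0) (𝓝 0) := by
  -- `log g - c log` is monotone, so `log g x ≤ const + c log x → -∞`.
  set φ : ℝ → ℝ := fun x => log (g x) - c * log x
  have hφ : ∀ x ∈ Ioo 0 b, HasDerivAt φ (g' x / g x - c * x⁻¹) x := fun x hx =>
    ((hg x hx).log (hg_pos x hx).ne').sub ((hasDerivAt_log hx.1.ne').const_mul c)
  have hφ_mono : MonotoneOn φ (Ioo 0 b) := by
    refine monotoneOn_of_hasDerivWithinAt_nonneg (f' := fun x => g' x / g x - c * x⁻¹)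
      (convex_Ioo 0 b)
      (fun x hx => (hφ x hx).continuousAt.continuousWithinAt) (fun x hx => ?_) (fun x hx => ?_)
    · rw [interior_Ioo] at hx ⊢
      exact (hφ x hx).hasDerivWithinAt
    · rw [interior_Ioo] at hx
      rw [sub_nonneg, ← div_eq_mul_inv, div_le_div_iff₀ hx.1 (hg_pos x hx), mul_comm (g' x)]
      exact hg' x hx
  have hlog : Tendsto (fun x => log (g x)) (𝓝[>] 0) atBot := by
    refine tendsto_atBot_mono' _ ?_
      (tendsto_atBot_add_const_left _ (φ (b / 2)) (tendsto_log_nhdsGT_zero.const_mul_atBot hc))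
    filter_upwards [Ioo_mem_nhdsGT (half_pos hb)] with x hx
    have := hφ_mono ⟨hx.1, hx.2.trans (half_lt_self hb)⟩ ⟨half_pos hb, half_lt_self hb⟩ hx.2.le
    simp only [φ] at this ⊢
    linarith
  refine (tendsto_exp_atBot.comp hlog).congr' ?_
  filter_upwards [Ioo_mem_nhdsGT hb] with x hx
  exact exp_log (hg_pos x hx)

theorem abs_integral_mul_sub_le {w X : ℝ → ℝ} {a b x ε : ℝ} (hab : a ≤ b)
    (hw : IntervalIntegrable w volume a b)
    (hwX : IntervalIntegrable (fun u => w u * X u) volume a b)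
    (hw_nonneg : ∀ u ∈ Ioo a b, 0 ≤ w u) (hX : ∀ u ∈ Ioc a b, |X u - x| ≤ ε) :
    |(∫ u in a..b, w u * X u) - (∫ u in a..b, w u) * x| ≤ ε * ∫ u in a..b, w u := by
  rw [← intervalIntegral.integral_mul_const, ← integral_sub hwX (hw.mul_const x),
    ← intervalIntegral.integral_const_mul, ← Real.norm_eq_abs]
  refine norm_integral_le_of_norm_le hab ?_ (hw.const_mul ε)
  filter_upwards [Measure.ae_ne volume b] with u hub hu
  have hwu := hw_nonneg u ⟨hu.1, lt_of_le_of_ne hu.2 hub⟩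
  rw [Real.norm_eq_abs, ← mul_sub, abs_mul, mul_comm ε, abs_of_nonneg hwu]
  exact mul_le_mul_of_nonneg_left (hX u hu) hwu

theorem tendsto_integral_mul_div_integral {X : ℝ → ℝ} {t : ℝ} (hXm : Measurable X)
    (hX : ContinuousWithinAt X (Ici t) t) {w : ℝ → ℝ → ℝ}
    (hw : ∀ᶠ δ in 𝓝[>] 0, IntervalIntegrable (w δ) volume t (t + δ) ∧
      (∀ u ∈ Ioo t (t + δ), 0 ≤ w δ u) ∧ 0 < ∫ u in t..t + δ, w δ u) :
    Tendsto (fun δ => (∫ u in t..t + δ, w δ u * X u) / ∫ u in t..t + δ, w δ u) (𝓝[>] 0)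
      (𝓝 (X t)) := by
  refine Metric.tendsto_nhds.mpr fun ε hε => ?_
  obtain ⟨r, hr, hXr⟩ := Metric.continuousWithinAt_iff.mp hX (ε / 2) (half_pos hε)
  filter_upwards [hw, Ioo_mem_nhdsGT hr] with δ ⟨hwi, hw_nonneg, hw_pos⟩ hδ
  have htδ : t ≤ t + δ := by linarith [hδ.1]
  have hXδ : ∀ u ∈ Ioc t (t + δ), |X u - X t| ≤ ε / 2 := fun u hu => by
    rw [← Real.dist_eq]
    refine (hXr hu.1.le ?_).le
    rw [Real.dist_eq, abs_of_pos (sub_pos.mpr hu.1)]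
    linarith [hu.2, hδ.2]
  have hwX : IntervalIntegrable (fun u => w δ u * X u) volume t (t + δ) := by
    rw [intervalIntegrable_iff_integrableOn_Ioc_of_le htδ] at hwi ⊢
    refine hwi.mul_bdd hXm.aestronglyMeasurable (c := |X t| + ε / 2) ?_
    filter_upwards [ae_restrict_mem measurableSet_Ioc] with u hu
    rw [Real.norm_eq_abs]
    linarith [abs_sub_abs_le_abs_sub (X u) (X t), hXδ u hu]
  rw [Real.dist_eq, div_sub' hw_pos.ne', abs_div, abs_of_pos hw_pos, div_lt_iff₀ hw_pos]
  calc _ ≤ ε / 2 * ∫ u in t..t + δ, w δ u := by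
        simpa [mul_comm] using abs_integral_mul_sub_le htδ hwi hwX hw_nonneg hXδ
    _ < ε * ∫ u in t..t + δ, w δ u := by nlinarith

theorem integral_comp_div_mul_eq {k X : ℝ → ℝ} {t δ m : ℝ} (hδ : δ ≠ 0) (hm : m ≠ 0) :
    ∫ v in (0:ℝ)..1, k (t + δ - δ * v) / k t * X (t + δ * (1 - v)) =
      -(δ * k t / m)⁻¹ * ((∫ u in t..t + δ, -k u * X u) / m) := by
  simp only [show ∀ v, t + δ * (1 - v) = t + δ - δ * v from fun v => by ring]
  rw [intervalIntegral.integral_comp_sub_mul (fun u => k u / k t * X u) hδ (t + δ)]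
  simp only [mul_one, mul_zero, sub_zero, add_sub_cancel_right, smul_eq_mul, neg_mul,
    intervalIntegral.integral_neg, div_mul_eq_mul_div, intervalIntegral.integral_div, inv_div]
  field_simp

section SmoothVariation

variable {F : ℝ → ℝ → ℝ} {d : ℝ}

theorem mul_p01_le_of_unifDiagLimit (hd : 0 < d) (hpos : ∀ t r : ℝ, r < t → 0 < F t r)
    (h01 : UnifDiagLimit (fun h t => h * p01 F t (t - h) / F t (t - h)) d)
    {K : Set ℝ} (hK : IsCompact K) :
    ∃ h₀ > 0, ∀ s ∈ K, ∀ h ∈ Ioo 0 h₀, h * p01 F s (s - h) ≤ -(d / 2) * F s (s - h) := by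
  obtain ⟨h₀, hh₀, h01⟩ := h01 K hK (d / 2) (half_pos hd)
  refine ⟨h₀, hh₀, fun s hs h hh => ?_⟩
  have hlt : h * p01 F s (s - h) / F s (s - h) < -(d / 2) := by
    have := (abs_lt.mp (h01 h hh.1 hh.2 s hs)).2
    dsimp only at this
    linarith
  exact ((div_lt_iff₀ (hpos s (s - h) (by linarith [hh.1]))).mp hlt).le

theorem eventually_p01_neg (hd : 0 < d) (hpos : ∀ t r : ℝ, r < t → 0 < F t r)
    (h01 : UnifDiagLimit (fun h t => h * p01 F t (t - h) / F t (t - h)) d) (t : ℝ) :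
    ∀ᶠ δ in 𝓝[>] 0, ∀ u ∈ Ioo t (t + δ), p01 F (t + δ) u < 0 := by
  obtain ⟨h₀, hh₀, hle⟩ :=
    mul_p01_le_of_unifDiagLimit hd hpos h01 (isCompact_Icc (a := t) (b := t + 1))
  filter_upwards [Ioo_mem_nhdsGT (lt_min hh₀ one_pos)] with δ ⟨hδ0, hδ⟩ u hu
  rw [lt_min_iff] at hδ
  have h := hle (t + δ) ⟨by linarith, by linarith [hδ.2]⟩ (t + δ - u)
    ⟨by linarith [hu.2], by linarith [hu.1, hδ.1]⟩
  rw [sub_sub_cancel] at h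
  nlinarith [hpos (t + δ) u hu.2, hu.2]

theorem diag_eq_zero_of_unifDiagLimit (hd : 0 < d)
    (hcont : ContinuousOn (fun p : ℝ × ℝ => F p.1 p.2) {p | p.2 ≤ p.1})
    (hdiff : DifferentiableOn ℝ (fun p : ℝ × ℝ => F p.1 p.2) {p | p.2 < p.1})
    (hpos : ∀ t r : ℝ, r < t → 0 < F t r)
    (h01 : UnifDiagLimit (fun h t => h * p01 F t (t - h) / F t (t - h)) d) (s : ℝ) :
    F s s = 0 := by
  -- `h ∂₂F(s, s - h) / F(s, s - h) → -d` forces `F(s, s - h) = O(h ^ (d / 2))`.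
  obtain ⟨h₀, hh₀, hle⟩ := mul_p01_le_of_unifDiagLimit hd hpos h01 isCompact_singleton
  have hderiv : ∀ h ∈ Ioo 0 h₀, HasDerivAt (fun h => F s (s - h)) (-p01 F s (s - h)) h :=
    fun h hh => by
      have := (hasDerivAt_p01 hdiff (by linarith [hh.1] : s - h < s)).comp h
        ((hasDerivAt_id h).const_sub s)
      rwa [mul_neg_one] at this
  have hzero := tendsto_nhdsGT_zero_of_le_mul_deriv hh₀ (half_pos hd) hderiv
    (fun h hh => hpos s (s - h) (by linarith [hh.1]))
    (fun h hh => by linarith [hle s rfl h hh])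
  have hdiag : ContinuousWithinAt (fun h => F s (s - h)) (Ioi 0) 0 :=
    (hcont (s, s) (le_refl s)).comp_of_eq (f := fun h => (s, s - h))
      (by fun_prop : Continuous fun h : ℝ => (s, s - h)).continuousWithinAt
      (fun h (hh : 0 < h) => show s - h ≤ s by linarith) (by simp)
  exact tendsto_nhds_unique (by simpa using hdiag.tendsto) hzero

theorem intervalIntegrable_neg_p01_and_integral_eq
    (hcont : ContinuousOn (fun p : ℝ × ℝ => F p.1 p.2) {p | p.2 ≤ p.1})
    (hdiff : DifferentiableOn ℝ (fun p : ℝ × ℝ => F p.1 p.2) {p | p.2 < p.1})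
    {a b : ℝ} (hab : a ≤ b) (hsign : ∀ u ∈ Ioo a b, p01 F b u ≤ 0) :
    IntervalIntegrable (fun u => -p01 F b u) volume a b ∧
      ∫ u in a..b, -p01 F b u = F b a - F b b := by
  have hcont' : ContinuousOn (fun u => -F b u) (Icc a b) :=
    (hcont.comp (continuous_const.prodMk continuous_id).continuousOn
      fun u (hu : u ∈ Icc a b) => hu.2).neg
  have hderiv : ∀ u ∈ Ioo a b, HasDerivAt (fun u => -F b u) (-p01 F b u) u :=
    fun u hu => (hasDerivAt_p01 hdiff hu.2).neg
  have hint : IntervalIntegrable (fun u => -p01 F b u) volume a b :=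
    (intervalIntegrable_iff_integrableOn_Ioc_of_le hab).mpr
      (integrableOn_deriv_of_nonneg hcont' hderiv fun u hu => neg_nonneg.mpr (hsign u hu))
  refine ⟨hint, ?_⟩
  rw [integral_eq_sub_of_hasDeriv_right_of_le hab hcont'
    (fun u hu => (hderiv u hu).hasDerivWithinAt) hint]
  ring

theorem eventually_integral_neg_p01_eq (hd : 0 < d)
    (hcont : ContinuousOn (fun p : ℝ × ℝ => F p.1 p.2) {p | p.2 ≤ p.1})
    (hdiff : DifferentiableOn ℝ (fun p : ℝ × ℝ => F p.1 p.2) {p | p.2 < p.1})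
    (hpos : ∀ t r : ℝ, r < t → 0 < F t r)
    (h01 : UnifDiagLimit (fun h t => h * p01 F t (t - h) / F t (t - h)) d) (t : ℝ) :
    ∀ᶠ δ in 𝓝[>] 0, IntervalIntegrable (fun u => -p01 F (t + δ) u) volume t (t + δ) ∧
      (∀ u ∈ Ioo t (t + δ), 0 ≤ -p01 F (t + δ) u) ∧
      ∫ u in t..t + δ, -p01 F (t + δ) u = F (t + δ) t := by
  filter_upwards [eventually_p01_neg hd hpos h01 t, self_mem_nhdsWithin] with δ hneg (hδ : 0 < δ)
  obtain ⟨hint, heq⟩ := intervalIntegrable_neg_p01_and_integral_eq hcont hdiff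
    (by linarith : t ≤ t + δ) fun u hu => (hneg u hu).le
  rw [diag_eq_zero_of_unifDiagLimit hd hcont hdiff hpos h01, sub_zero] at heq
  exact ⟨hint, fun u hu => neg_nonneg.mpr (hneg u hu).le, heq⟩

end SmoothVariation

theorem proposition2_general (d : ℝ) (hd : d ∈ Set.Ioo (0:ℝ) 1)
    (F : ℝ → ℝ → ℝ) (hF : SmoothVar F d)
    (f : ℝ → ℝ → ℝ) (hf : ∀ t r : ℝ, f t r = p01 F t r)
    (X : ℝ → ℝ)
    (hXrc : ∀ s : ℝ, Tendsto X (nhdsWithin s (Set.Ici s)) (nhds (X s))) :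
    ∀ t ∈ Set.Icc (0:ℝ) 1, ∀ ε > (0:ℝ), ∃ δ₀ > (0:ℝ), ∀ δ : ℝ, 0 < δ → δ < δ₀ →
      |(∫ v in (0:ℝ)..1,
          (f (t + δ) (t + δ - δ * v) / f (t + δ) t) * X (t + δ * (1 - v)))
        - (1 / d) * X t| < ε := by
  obtain ⟨hcont, hsmooth, hpos, h01, -⟩ := hF
  have hdiff := hsmooth.differentiableOn (by norm_num)
  intro t _ ε hε
  have hweight := eventually_integral_neg_p01_eq hd.1 hcont hdiff hpos h01 t
  have havg : Tendsto (fun δ => (∫ u in t..t + δ, -p01 F (t + δ) u * X u) /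
      ∫ u in t..t + δ, -p01 F (t + δ) u) (𝓝[>] 0) (𝓝 (X t)) := by
    refine tendsto_integral_mul_div_integral (measurable_of_continuousWithinAt_Ici hXrc) (hXrc t) ?_
    filter_upwards [hweight, self_mem_nhdsWithin] with δ ⟨hint, hnn, heq⟩ (hδ : 0 < δ)
    exact ⟨hint, hnn, heq ▸ hpos _ _ (by linarith)⟩
  have hratio : Tendsto (fun δ => δ * p01 F (t + δ) t / F (t + δ) t) (𝓝[>] 0) (𝓝 (-d)) := by
    simpa only [add_sub_cancel_right] using h01.tendsto_nhdsGT t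
  have hlim : Tendsto (fun δ => ∫ v in (0:ℝ)..1,
      (f (t + δ) (t + δ - δ * v) / f (t + δ) t) * X (t + δ * (1 - v))) (𝓝[>] 0)
      (𝓝 (1 / d * X t)) := by
    have h := (hratio.inv₀ (neg_ne_zero.mpr hd.1.ne')).neg.mul havg
    rw [inv_neg, neg_neg, inv_eq_one_div] at h
    refine h.congr' ?_
    filter_upwards [hweight, self_mem_nhdsWithin] with δ ⟨_, _, heq⟩ (hδ : 0 < δ)
    simp only [hf, heq]
    exact (integral_comp_div_mul_eq hδ.ne' (hpos (t + δ) t (by linarith)).ne').symm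
  obtain ⟨δ₀, hδ₀, h⟩ := Metric.tendsto_nhdsWithin_nhds.mp hlim ε hε
  refine ⟨δ₀, hδ₀, fun δ hδ hδδ₀ => ?_⟩
  simpa [Real.dist_eq, abs_of_pos hδ] using h (mem_Ioi.mpr hδ) (by simpa [abs_of_pos hδ])

/-- Proposition 2, pathwise: for a càdlàg path `X` bounded on
compacts, `lim_{δ↓0} |∫₀¹ f_δ(t,v) X(t+δ(1−v)) dv − (1/d) X(t)| = 0`
for every `t ∈ [0,1]`. -/
theorem proposition2 (d : ℝ) (hd : d ∈ Set.Ioo (0:ℝ) 1)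
    (F : ℝ → ℝ → ℝ) (hF : SmoothVar F d)
    (f : ℝ → ℝ → ℝ) (hf : ∀ t r : ℝ, f t r = p01 F t r)
    (X : ℝ → ℝ)
    (hXrc : ∀ s : ℝ, Tendsto X (nhdsWithin s (Set.Ici s)) (nhds (X s)))
    (hXll : ∀ s : ℝ, ∃ l : ℝ, Tendsto X (nhdsWithin s (Set.Iio s)) (nhds l))
    (hXbdd : ∀ T > (0:ℝ), ∃ C : ℝ, ∀ s ∈ Set.Icc (-T) T, |X s| ≤ C) :
    ∀ t ∈ Set.Icc (0:ℝ) 1, ∀ ε > (0:ℝ), ∃ δ₀ > (0:ℝ), ∀ δ : ℝ, 0 < δ → δ < δ₀ →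
      |(∫ v in (0:ℝ)..1,
          (f (t + δ) (t + δ - δ * v) / f (t + δ) t) * X (t + δ * (1 - v)))
        - (1 / d) * X t| < ε :=
  proposition2_general d hd F hF f hf X hXrc
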